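/- arXiv:1410.6097 — 2 statements merged into one kernel-verified Lean document; each statement's English description precedes it below -/
import Mathlib

section
/- Let A = (Q, A, ·, ∘) be a reversible invertible Mealy automaton with 𝒢(A) infinite. Then at most one of the two groups 𝒢(A) and 𝒢(∂A) (the group generated by the dual automaton) can have all stabilizers of boundary points trivial. -/
/-- A Mealy automaton (transducer) with state set `Q` and alphabet `A`. -/
structure Mealy (Q A : Type*) where
  step : Q → A → Q
  out : Q → A → A

namespace Mealy

variable {Q A : Type*}

/-- Action of a state on finite words over the alphabet. -/
def act (M : Mealy Q A) : Q → List A → List A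
  | _, [] => []
  | q, a :: w => M.out q a :: act M (M.step q a) w

/-- Action of the formal inverse of a state on finite words. -/
noncomputable def actInv (M : Mealy Q A) [Nonempty A] : Q → List A → List A
  | _, [] => []
  | q, a :: w =>
    Function.invFun (M.out q) a ::
      actInv M (M.step q (Function.invFun (M.out q) a)) w

/-- Action of a word over `Q ∪ Q⁻¹` (letters `(q, true)` are positive, `(q, false)`
are formal inverses) on finite words over the alphabet. -/
noncomputable def evalW (M : Mealy Q A) [Nonempty A] : List (Q × Bool) → List A → List A
  | [], v => v
  | (q, true) :: w, v => act M q (evalW M w v)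
  | (q, false) :: w, v => actInv M q (evalW M w v)

/-- Invertibility: every output function is a permutation of the alphabet. -/
def IsInvertible (M : Mealy Q A) : Prop := ∀ q, Function.Bijective (M.out q)

/-- Reversibility: every letter acts as a permutation of the states. -/
def IsReversible (M : Mealy Q A) : Prop := ∀ a, Function.Bijective fun q => M.step q a

/-- Bireversibility: invertible, reversible, and the output automaton is reversible. -/
def IsBireversible (M : Mealy Q A) [Nonempty A] : Prop :=
  M.IsInvertible ∧ M.IsReversible ∧
    ∀ b, Function.Bijective fun q => M.step q (Function.invFun (M.out q) b)

/-- The dual automaton: states and letters are exchanged. -/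
def dual (M : Mealy Q A) : Mealy A Q where
  step a q := M.out q a
  out a q := M.step q a

/-- The enriched dual `(∂A)⁻ = ∂(A ⊔ A⁻¹)`: states are letters of `A`,
the alphabet is `Q ∪ Q⁻¹`. -/
noncomputable def edual (M : Mealy Q A) [Nonempty A] : Mealy A (Q × Bool) where
  step a qs :=
    match qs with
    | (q, true) => M.out q a
    | (q, false) => Function.invFun (M.out q) a
  out a qs :=
    match qs with
    | (q, true) => (M.step q a, true)
    | (q, false) => (M.step q (Function.invFun (M.out q) a), false)

/-- The disjoint union `A ⊔ A⁻¹` of an invertible automaton with its inverse: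
states are `Q ∪ Q⁻¹`. -/
noncomputable def withInv (M : Mealy Q A) [Nonempty A] : Mealy (Q × Bool) A where
  step qs a :=
    match qs with
    | (q, true) => (M.step q a, true)
    | (q, false) => (M.step q (Function.invFun (M.out q) a), false)
  out qs a :=
    match qs with
    | (q, true) => M.out q a
    | (q, false) => Function.invFun (M.out q) a

/-- The enrichment `A⁻` of a reversible transducer, over the doubled alphabet
`A ∪ A⁻¹`: to every transition `q →^{a|b} p` the inverse transition
`p →^{a⁻¹|b⁻¹} q` is added. -/
noncomputable def enrich (M : Mealy Q A) [Nonempty Q] : Mealy Q (A × Bool) where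
  step q as :=
    match as with
    | (a, true) => M.step q a
    | (a, false) => Function.invFun (fun p => M.step p a) q
  out q as :=
    match as with
    | (a, true) => (M.out q a, true)
    | (a, false) => (M.out (Function.invFun (fun p => M.step p a) q) a, false)

/-- The state reached from `q` after reading the word `w`. -/
def run (M : Mealy Q A) (q : Q) (w : List A) : Q := w.foldl M.step q

/-- Action of a state on right-infinite words over the alphabet. -/
def actOmega (M : Mealy Q A) (q : Q) (u : ℕ → A) : ℕ → A :=
  fun n => M.out (M.run q (List.ofFn fun i : Fin n => u i)) (u n)

/-- Action of a word of states on right-infinite words. -/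
def applyListOmega (M : Mealy Q A) (l : List Q) (u : ℕ → A) : ℕ → A :=
  l.foldl (fun v q => M.actOmega q v) u

/-- The orbit of a boundary point under the semigroup generated by the states. -/
def orbitOmega (M : Mealy Q A) (u : ℕ → A) : Set (ℕ → A) :=
  {z | ∃ l : List Q, z = M.applyListOmega l u}

/-- Action of a word of states on finite words over the alphabet. -/
def wact (M : Mealy Q A) : List Q → List A → List A
  | [], u => u
  | q :: w, u => act M q (wact M w u)

/-- State-word transition: the coupled action `w · u` of an input word `u` on a
word of states `w`. -/
def wstep (M : Mealy Q A) : List Q → List A → List Q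
  | [], _ => []
  | q :: w, u => M.run q (wact M w u) :: wstep M w u

end Mealy

/-- The length-`n` prefix of a right-infinite word. -/
def pre {α : Type*} (u : ℕ → α) (n : ℕ) : List α := List.ofFn fun i : Fin n => u i

/-- The periodic infinite word `w^ω`. -/
def periodicWord {α : Type*} [Inhabited α] (w : List α) : ℕ → α :=
  fun n => w.getD (n % w.length) default

/-- The generating permutations of the automaton group: permutations of `A*` that
agree with the action of some state. -/
def Mealy.genSet {Q A : Type*} (M : Mealy Q A) : Set (Equiv.Perm (List A)) :=
  {σ | ∃ q : Q, ∀ w, σ w = M.act q w}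

/-- The group `𝒢(A)` generated by an invertible Mealy automaton, as a group of
permutations of the tree `A*`. -/
def Mealy.autGroup {Q A : Type*} (M : Mealy Q A) : Subgroup (Equiv.Perm (List A)) :=
  Subgroup.closure M.genSet

/-- `𝒢(A)` has all trivial stabilizers in the boundary `A^ω`: the only element of
the group fixing every finite prefix of some infinite word is the identity. -/
def Mealy.AllTrivialBoundaryStabilizers {Q A : Type*} (M : Mealy Q A) : Prop :=
  ∀ u : ℕ → A, ∀ g ∈ M.autGroup,
    (∀ n : ℕ, g (pre u n) = pre u n) → g = 1

/-!
Take a periodic orbit, of period `c`, of the map `(q, a) ↦ (q·a, q∘a)` on `Q × A`, and let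
`b ∈ A^c` be the letters read along it. Through `∂A`, the word `b` fixes the periodic word of
states read along the orbit, so if all boundary stabilizers of `𝒢(∂A)` are trivial then `b` acts
trivially on `Q*`. Then every state returns to itself after reading `b`, and each image `q(b)`
is again a word of length `c` acting trivially on `Q*`. Hence `𝒢(A)` maps `b^ω` into the finite
set of such periodic words; if all boundary stabilizers of `𝒢(A)` are trivial, `g ↦ g(b^ω)` is
injective and `𝒢(A)` is finite.
-/

open Function

namespace Function

theorem exists_isPeriodicPt_of_finite {α : Type*} [Finite α] [Nonempty α] (f : α → α) :
    ∃ x n, 0 < n ∧ IsPeriodicPt f n x := by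
  obtain ⟨i, j, hij, hfij⟩ := Set.finite_univ.exists_lt_map_eq_of_forall_mem
    (f := fun n => f^[n] (Classical.arbitrary α)) fun _ => Set.mem_univ _
  refine ⟨f^[i] (Classical.arbitrary α), j - i, by omega, ?_⟩
  rw [IsPeriodicPt, IsFixedPt, ← iterate_add_apply, Nat.sub_add_cancel hij.le, hfij]

end Function

section Boundary

variable {α : Type*}

theorem pre_length (u : ℕ → α) (n : ℕ) : (pre u n).length = n := List.length_ofFn

theorem pre_succ (u : ℕ → α) (n : ℕ) : pre u (n + 1) = u 0 :: pre (fun k => u (k + 1)) n :=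
  List.ofFn_succ

theorem pre_succ_eq_append (u : ℕ → α) (n : ℕ) : pre u (n + 1) = pre u n ++ [u n] :=
  List.ofFn_succ_last

theorem eq_of_forall_pre_eq {u v : ℕ → α} (h : ∀ n, pre u n = pre v n) : u = v := by
  funext n
  simpa using congrFun (List.ofFn_injective (h (n + 1))) (Fin.last n)

def BoundaryMapsTo (g : Equiv.Perm (List α)) (u v : ℕ → α) : Prop :=
  ∀ n, g (pre u n) = pre v n

theorem BoundaryMapsTo.one (u : ℕ → α) : BoundaryMapsTo 1 u u := fun _ => rfl

theorem BoundaryMapsTo.mul {g h : Equiv.Perm (List α)} {u v w : ℕ → α}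
    (hh : BoundaryMapsTo h v w) (hg : BoundaryMapsTo g u v) : BoundaryMapsTo (h * g) u w :=
  fun n => by rw [Equiv.Perm.mul_apply, hg n, hh n]

theorem BoundaryMapsTo.inv {g : Equiv.Perm (List α)} {u v : ℕ → α}
    (hg : BoundaryMapsTo g u v) : BoundaryMapsTo g⁻¹ v u :=
  fun n => by rw [← hg n]; exact g.symm_apply_apply _

theorem BoundaryMapsTo.injective {g : Equiv.Perm (List α)} {u u' v : ℕ → α}
    (hu : BoundaryMapsTo g u v) (hu' : BoundaryMapsTo g u' v) : u = u' :=
  eq_of_forall_pre_eq fun n => g.injective ((hu n).trans (hu' n).symm)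

theorem BoundaryMapsTo.exists_preimage {S : Set (ℕ → α)} (hS : S.Finite)
    {g : Equiv.Perm (List α)} (hg : ∀ u ∈ S, ∃ v ∈ S, BoundaryMapsTo g u v) :
    ∀ v ∈ S, ∃ u ∈ S, BoundaryMapsTo g u v := by
  choose f hfS hf using hg
  have : Finite S := hS.to_subtype
  let f' : S → S := fun u => ⟨f u.1 u.2, hfS u.1 u.2⟩
  have hf' : Injective f' := fun u u' huu' => by
    have hsame : f u.1 u.2 = f u'.1 u'.2 := congrArg Subtype.val huu'
    exact Subtype.ext ((hf u.1 u.2).injective (hsame ▸ hf u'.1 u'.2))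
  intro v hv
  obtain ⟨u, hu⟩ := (Finite.injective_iff_surjective.mp hf') ⟨v, hv⟩
  have hv : f u.1 u.2 = v := congrArg Subtype.val hu
  exact ⟨u.1, u.2, hv ▸ hf u.1 u.2⟩

/-- Closure under inverses uses that `S` is finite: a permutation mapping `S` into itself
injectively also maps it onto itself. -/
def boundaryInvariantSubgroup (S : Set (ℕ → α)) (hS : S.Finite) :
    Subgroup (Equiv.Perm (List α)) where
  carrier := {g | ∀ u ∈ S, ∃ v ∈ S, BoundaryMapsTo g u v}
  one_mem' u hu := ⟨u, hu, BoundaryMapsTo.one u⟩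
  mul_mem' {g h} hg hh u hu := by
    obtain ⟨v, hv, hgv⟩ := hh u hu
    obtain ⟨w, hw, hhw⟩ := hg v hv
    exact ⟨w, hw, hhw.mul hgv⟩
  inv_mem' {g} hg v hv := by
    obtain ⟨u, hu, hgu⟩ := BoundaryMapsTo.exists_preimage hS hg v hv
    exact ⟨u, hu, hgu.inv⟩

theorem finite_of_forall_boundaryMapsTo {G : Subgroup (Equiv.Perm (List α))} {u : ℕ → α}
    (hstab : ∀ g ∈ G, BoundaryMapsTo g u u → g = 1) {S : Set (ℕ → α)} (hS : S.Finite)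
    (hG : ∀ g ∈ G, ∃ v ∈ S, BoundaryMapsTo g u v) : Finite G := by
  choose f hfS hf using hG
  have : Finite S := hS.to_subtype
  refine Finite.of_injective (fun g : G => (⟨f g.1 g.2, hfS g.1 g.2⟩ : S)) fun g g' hgg' => ?_
  have hsame : f g.1 g.2 = f g'.1 g'.2 := congrArg Subtype.val hgg'
  have hfix : BoundaryMapsTo (g.1⁻¹ * g'.1) u u := (hf g.1 g.2).inv.mul (hsame ▸ hf g'.1 g'.2)
  exact Subtype.ext (inv_mul_eq_one.mp (hstab _ (mul_mem (inv_mem g.2) g'.2) hfix))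

variable [Inhabited α]

theorem pre_periodicWord_of_le {w : List α} {n : ℕ} (hn : n ≤ w.length) :
    pre (periodicWord w) n = w.take n := by
  apply List.ext_getElem (by simp [pre_length, hn])
  intro i hi _
  rw [pre_length] at hi
  have hiw : i < w.length := hi.trans_le hn
  simp [pre, periodicWord, Nat.mod_eq_of_lt hiw, List.getElem?_eq_getElem hiw]

theorem pre_periodicWord_length_add (w : List α) (n : ℕ) :
    pre (periodicWord w) (w.length + n) = w ++ pre (periodicWord w) n := by
  induction n with
  | zero =>
    rw [Nat.add_zero, pre_periodicWord_of_le le_rfl, List.take_length, pre, List.ofFn_zero,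
      List.append_nil]
  | succ n ih =>
    rw [← Nat.add_assoc, pre_succ_eq_append, ih, pre_succ_eq_append, List.append_assoc]
    simp [periodicWord]

end Boundary

namespace Mealy

variable {Q A : Type*} (M : Mealy Q A)

theorem act_length (q : Q) (w : List A) : (M.act q w).length = w.length := by
  induction w generalizing q with
  | nil => rfl
  | cons a w ih => simp [act, ih]

theorem act_append (q : Q) (x y : List A) :
    M.act q (x ++ y) = M.act q x ++ M.act (M.run q x) y := by
  induction x generalizing q with
  | nil => rfl
  | cons a x ih => simp [act, run, ih]

theorem act_take (q : Q) (w : List A) (n : ℕ) : M.act q (w.take n) = (M.act q w).take n := by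
  induction w generalizing q n with
  | nil => simp [act]
  | cons a w ih => cases n <;> simp [act, ih]

theorem act_bijective (hM : M.IsInvertible) (q : Q) : Bijective (M.act q) := by
  constructor
  · intro w w' h
    induction w generalizing q w' with
    | nil => cases w' <;> simp_all [act]
    | cons a w ih =>
      cases w' with
      | nil => simp [act] at h
      | cons a' w' =>
        obtain ⟨ha, hw⟩ := List.cons.inj h
        obtain rfl := (hM q).1 ha
        rw [ih _ hw]
  · intro w
    induction w generalizing q with
    | nil => exact ⟨[], rfl⟩
    | cons b w ih =>
      obtain ⟨a, rfl⟩ := (hM q).2 b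
      obtain ⟨w', hw'⟩ := ih (M.step q a)
      exact ⟨a :: w', by rw [act, hw']⟩

def dualWordAct (b : List A) (ρ : List Q) : List Q :=
  b.foldl (fun ρ x => M.dual.act x ρ) ρ

theorem dualWordAct_cons (x : A) (b : List A) (ρ : List Q) :
    M.dualWordAct (x :: b) ρ = M.dualWordAct b (M.dual.act x ρ) := rfl

theorem dualWordAct_apply_nil (b : List A) : M.dualWordAct b [] = [] := by
  induction b with
  | nil => rfl
  | cons x b ih => exact ih

theorem dualWordAct_apply_cons (b : List A) (p : Q) (ρ : List Q) :
    M.dualWordAct b (p :: ρ) = M.run p b :: M.dualWordAct (M.act p b) ρ := by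
  induction b generalizing p ρ with
  | nil => rfl
  | cons x b ih => exact ih _ _

variable {M}

theorem run_eq_self_of_dualWordAct_eq_id {b : List A} (h : M.dualWordAct b = id) (p : Q) :
    M.run p b = p := by
  simpa [dualWordAct_apply_cons, dualWordAct_apply_nil] using congrFun h [p]

theorem dualWordAct_act_eq_id {b : List A} (h : M.dualWordAct b = id) (p : Q) :
    M.dualWordAct (M.act p b) = id := by
  funext ρ
  have hp := congrFun h (p :: ρ)
  rw [dualWordAct_apply_cons] at hp
  exact (List.cons.inj hp).2

variable (M)

noncomputable def dualWordPerm (hrev : M.IsReversible) : List A → Equiv.Perm (List Q)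
  | [] => 1
  | x :: b => dualWordPerm hrev b * Equiv.ofBijective _ (M.dual.act_bijective hrev x)

theorem coe_dualWordPerm (hrev : M.IsReversible) (b : List A) :
    ⇑(M.dualWordPerm hrev b) = M.dualWordAct b := by
  induction b with
  | nil => rfl
  | cons x b ih =>
    funext ρ
    simp only [dualWordPerm, Equiv.Perm.coe_mul, comp_apply, ih, Equiv.ofBijective_apply,
      dualWordAct_cons]

theorem dualWordPerm_mem_autGroup (hrev : M.IsReversible) (b : List A) :
    M.dualWordPerm hrev b ∈ M.dual.autGroup := by
  induction b with
  | nil => exact one_mem _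
  | cons x b ih => exact mul_mem ih (Subgroup.subset_closure ⟨x, fun _ => rfl⟩)

theorem autGroup_eq_bot_of_isEmpty [IsEmpty (Q × A)] : M.autGroup = ⊥ := by
  refine Subgroup.closure_eq_bot_iff.2 ?_
  rintro σ ⟨q, hq⟩
  refine Set.mem_singleton_iff.2 (Equiv.ext fun w => ?_)
  cases w with
  | nil => exact hq []
  | cons a w => exact isEmptyElim (q, a)

def cross (x : Q × A) : Q × A := (M.step x.1 x.2, M.out x.1 x.2)

theorem dual_act_pre_cross (y : Q × A) (m : ℕ) :
    M.dual.act y.2 (pre (fun n => (M.cross^[n] y).1) m) =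
      pre (fun n => (M.cross^[n] (M.cross y)).1) m := by
  induction m generalizing y with
  | zero => rfl
  | succ m ih =>
    rw [pre_succ, pre_succ]
    simp only [iterate_zero_apply, iterate_succ_apply]
    exact congrArg _ (ih (M.cross y))

theorem dualWordAct_pre_cross (y : Q × A) (k m : ℕ) :
    M.dualWordAct (pre (fun n => (M.cross^[n] y).2) k) (pre (fun n => (M.cross^[n] y).1) m) =
      pre (fun n => (M.cross^[n] (M.cross^[k] y)).1) m := by
  induction k generalizing y with
  | zero => rfl
  | succ k ih =>
    rw [pre_succ]
    simp only [iterate_zero_apply, iterate_succ_apply]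
    rw [dualWordAct_cons, dual_act_pre_cross, ih]

/-- The letters read along a periodic orbit of `cross` act, through the dual, by fixing the
state word read along that orbit. -/
theorem exists_dualWordAct_eq_id [Finite Q] [Finite A] [Nonempty (Q × A)]
    (hrev : M.IsReversible) (hD : M.dual.AllTrivialBoundaryStabilizers) :
    ∃ b : List A, b ≠ [] ∧ M.dualWordAct b = id := by
  obtain ⟨y, c, hc, hy⟩ := exists_isPeriodicPt_of_finite M.cross
  set b := pre (fun n => (M.cross^[n] y).2) c
  have hfix : ∀ m, M.dualWordPerm hrev b (pre (fun n => (M.cross^[n] y).1) m) =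
      pre (fun n => (M.cross^[n] y).1) m := fun m => by
    rw [coe_dualWordPerm, dualWordAct_pre_cross, hy.eq]
  have hone := hD _ _ (M.dualWordPerm_mem_autGroup hrev b) hfix
  refine ⟨b, List.ne_nil_of_length_pos (by rwa [pre_length]), ?_⟩
  rw [← coe_dualWordPerm M hrev, hone]
  rfl

section Periodic

variable [Inhabited A]

theorem act_pre_periodicWord {b : List A} (hb : b ≠ []) (hrun : ∀ p, M.run p b = p) (q : Q)
    (n : ℕ) : M.act q (pre (periodicWord b) n) = pre (periodicWord (M.act q b)) n := by
  induction n using Nat.strong_induction_on with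
  | _ n ih =>
    have hlen := M.act_length q b
    rcases le_or_gt n b.length with hn | hn
    · rw [pre_periodicWord_of_le hn, pre_periodicWord_of_le (hlen ▸ hn), act_take]
    · obtain ⟨m, rfl⟩ : ∃ m, n = b.length + m := ⟨n - b.length, by omega⟩
      have hm : m < b.length + m := by have := List.length_pos_of_ne_nil hb; omega
      rw [pre_periodicWord_length_add, act_append, hrun, ih m hm, ← hlen,
        pre_periodicWord_length_add]

def periodicRelationPoints (c : ℕ) : Set (ℕ → A) :=
  periodicWord '' {b | b.length = c ∧ M.dualWordAct b = id}

theorem periodicRelationPoints_finite [Finite A] (c : ℕ) : (M.periodicRelationPoints c).Finite :=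
  ((List.finite_length_eq A c).subset fun _ hb => hb.1).image _

theorem autGroup_le_boundaryInvariantSubgroup [Finite A] {c : ℕ} (hc : 0 < c) :
    M.autGroup ≤ boundaryInvariantSubgroup _ (M.periodicRelationPoints_finite c) := by
  refine Subgroup.closure_le _ |>.2 ?_
  rintro σ ⟨q, hq⟩ _ ⟨b, ⟨hbc, hrel⟩, rfl⟩
  have hrel' : (M.act q b).length = c ∧ M.dualWordAct (M.act q b) = id :=
    ⟨by rw [act_length, hbc], dualWordAct_act_eq_id hrel q⟩
  refine ⟨periodicWord (M.act q b), ⟨M.act q b, hrel', rfl⟩, fun n => ?_⟩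
  rw [hq, act_pre_periodicWord M (List.ne_nil_of_length_pos (hbc ▸ hc))
    (run_eq_self_of_dualWordAct_eq_id hrel)]

end Periodic

theorem finite_autGroup_of_dualWordAct_eq_id [Finite A] (hM : M.AllTrivialBoundaryStabilizers)
    {b : List A} (hb : b ≠ []) (hrel : M.dualWordAct b = id) : Finite M.autGroup := by
  have : Inhabited A := ⟨b.head hb⟩
  have hle := M.autGroup_le_boundaryInvariantSubgroup (List.length_pos_of_ne_nil hb)
  exact finite_of_forall_boundaryMapsTo (fun g hg => hM _ g hg)
    (M.periodicRelationPoints_finite _) fun g hg => hle hg _ ⟨b, ⟨rfl, hrel⟩, rfl⟩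

end Mealy

theorem not_both_trivial_boundary_stabilizers_general {Q A : Type}
    [Fintype Q] [Fintype A] (M : Mealy Q A)
    (hrev : M.IsReversible)
    (hInf : Infinite M.autGroup) :
    ¬ (M.AllTrivialBoundaryStabilizers ∧ M.dual.AllTrivialBoundaryStabilizers) := by
  rintro ⟨hM, hD⟩
  rcases isEmpty_or_nonempty (Q × A) with hQA | hQA
  · rw [M.autGroup_eq_bot_of_isEmpty] at hInf
    exact not_finite (⊥ : Subgroup (Equiv.Perm (List A)))
  obtain ⟨b, hb, hrel⟩ := M.exists_dualWordAct_eq_id hrev hD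
  exact not_finite_iff_infinite.mpr hInf (M.finite_autGroup_of_dualWordAct_eq_id hM hb hrel)

/-- For a reversible invertible Mealy automaton `A` with `𝒢(A)` infinite, at most
one of the two groups `𝒢(A)` and `𝒢(∂A)` (the group generated by the dual
automaton) can have all trivial stabilizers of boundary points. -/
theorem not_both_trivial_boundary_stabilizers {Q A : Type}
    [Fintype Q] [Fintype A] (M : Mealy Q A)
    (hrev : M.IsReversible) (hinv : M.IsInvertible)
    (hInf : Infinite M.autGroup) :
    ¬ (M.AllTrivialBoundaryStabilizers ∧ M.dual.AllTrivialBoundaryStabilizers) :=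
  not_both_trivial_boundary_stabilizers_general M hrev hInf
end

section
/- Let G be a non-trivial finite group and C̃(G) the bi-0-transition Cayley machine (with transitions 𝐠 →^{(x)|(x)} 𝐠𝐱 for g ∉ {x^{-1}, e}, 𝐠 →^{(x)|(e)} 𝐞 for g = x^{-1} ≠ e, and 𝐞 →^{(x)|(e)} 𝐱 for all x). Then in the group 𝒢(∂C̃(G)) generated by the dual, the generator (g) and the generator (g^{-1}) are mutually inverse: (g)(g^{-1}) = (g^{-1})(g) = identity. In particular 𝒢(∂C̃(G)) is not free on the generating set (G). -/
/-- The bi-0-transition Cayley machine `C̃(G)` of a finite group `G`: transitions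
`g →^{x|x} g·x` for `g ∉ {x⁻¹, e}`, `g →^{x|e} e` for `g = x⁻¹ ≠ e`, and
`e →^{x|e} x` for all `x`. -/
def cayleyBi0 (G : Type*) [Group G] [DecidableEq G] : Mealy G G where
  step g x := if g = 1 then x else if g = x⁻¹ then 1 else g * x
  out g x := if g = 1 then 1 else if g = x⁻¹ then 1 else x

/-!
In the dual of `C̃(G)` a state `x` reads a letter `q` as follows: `q = e` is written as `x`
and `q = x⁻¹` as `e`, both moving to the state `e`, which acts trivially; any other `q`
is written as `q x` and the state stays `x`. So running `(x⁻¹)` and then `(x)` restores each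
letter and leaves a pair of states of the same shape `(y, y⁻¹)`, whence `(x)(x⁻¹) = 1`.
Being a positive word, `(x)(x⁻¹)` is reduced, hence non-trivial in the free group on `(G)`.
-/

namespace Mealy

variable {Q A : Type*}

theorem act_act_eq_self_of_rel (M : Mealy Q A) (R : Q → Q → Prop)
    (hR : ∀ p q, R p q → ∀ a,
      M.out p (M.out q a) = a ∧ R (M.step p (M.out q a)) (M.step q a))
    {p q : Q} (hpq : R p q) (w : List A) : M.act p (M.act q w) = w := by
  induction w generalizing p q with
  | nil => rfl
  | cons a w ih =>
    obtain ⟨hout, hstep⟩ := hR p q hpq a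
    simp only [act, hout, ih hstep]

end Mealy

theorem FreeGroup.mk_ne_one_of_isReduced {α : Type*} [DecidableEq α] {L : List (α × Bool)}
    (hL : FreeGroup.IsReduced L) (hne : L ≠ []) : FreeGroup.mk L ≠ 1 := by
  intro h
  apply hne
  rw [← hL.reduce_eq, ← FreeGroup.toWord_mk, h, FreeGroup.toWord_one]

section CayleyBi0

variable {G : Type*} [Group G] [DecidableEq G]

theorem cayleyBi0_step_of_ne {q x : G} (hq : q ≠ 1) (hqx : q ≠ x⁻¹) :
    (cayleyBi0 G).step q x = q * x := by
  simp [cayleyBi0, hq, hqx]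

theorem cayleyBi0_out_of_ne {q x : G} (hq : q ≠ 1) (hqx : q ≠ x⁻¹) :
    (cayleyBi0 G).out q x = x := by
  simp [cayleyBi0, hq, hqx]

theorem cayleyBi0_step_step_inv_and_out_step_inv (q x : G) :
    (cayleyBi0 G).step ((cayleyBi0 G).step q x) x⁻¹ = q ∧
      (cayleyBi0 G).out ((cayleyBi0 G).step q x) x⁻¹ = ((cayleyBi0 G).out q x)⁻¹ := by
  rcases eq_or_ne q 1 with rfl | hq
  · by_cases hx : x = 1 <;> simp [cayleyBi0, hx]
  rcases eq_or_ne q x⁻¹ with rfl | hqx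
  · simp_all [cayleyBi0]
  have hqx1 : q * x ≠ 1 := fun h => hqx (eq_inv_of_mul_eq_one_left h)
  have hqxx : q * x ≠ x⁻¹⁻¹ := by simpa using hq
  rw [cayleyBi0_step_of_ne hq hqx, cayleyBi0_step_of_ne hqx1 hqxx,
    cayleyBi0_out_of_ne hqx1 hqxx, cayleyBi0_out_of_ne hq hqx, mul_inv_cancel_right]
  exact ⟨rfl, rfl⟩

theorem dual_cayleyBi0_act_act_inv (x : G) (w : List G) :
    (cayleyBi0 G).dual.act x ((cayleyBi0 G).dual.act x⁻¹ w) = w := by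
  refine (cayleyBi0 G).dual.act_act_eq_self_of_rel (fun p q => p = q⁻¹) ?_ (inv_inv x).symm w
  rintro _ p rfl q
  exact cayleyBi0_step_step_inv_and_out_step_inv q p

end CayleyBi0

theorem dual_cayleyBi0_generators_mutually_inverse_general
    {G : Type} [Group G] [DecidableEq G] [Nontrivial G] :
    (∀ g : G, ∀ w : List G,
      (cayleyBi0 G).dual.act g ((cayleyBi0 G).dual.act g⁻¹ w) = w ∧
      (cayleyBi0 G).dual.act g⁻¹ ((cayleyBi0 G).dual.act g w) = w) ∧
    (∃ w : List (G × Bool), FreeGroup.mk w ≠ 1 ∧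
      ∀ v : List G, (cayleyBi0 G).dual.evalW w v = v) := by
  refine ⟨fun g w => ⟨dual_cayleyBi0_act_act_inv g w, ?_⟩, ?_⟩
  · simpa using dual_cayleyBi0_act_act_inv g⁻¹ w
  obtain ⟨g, -⟩ := exists_ne (1 : G)
  refine ⟨[(g, true), (g⁻¹, true)], FreeGroup.mk_ne_one_of_isReduced ?_ (List.cons_ne_nil _ _),
    dual_cayleyBi0_act_act_inv g⟩
  simp [FreeGroup.isReduced_cons_cons, FreeGroup.IsReduced.singleton]

/-- For a non-trivial finite group `G`, in the group `𝒢(∂C̃(G))` generated by the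
dual of the bi-0-transition Cayley machine, the generators `(g)` and `(g⁻¹)` are
mutually inverse; in particular `𝒢(∂C̃(G))` is not free on the generating set
`(G)`. -/
theorem dual_cayleyBi0_generators_mutually_inverse
    {G : Type} [Group G] [Fintype G] [DecidableEq G] [Nontrivial G] [Nonempty G] :
    (∀ g : G, ∀ w : List G,
      (cayleyBi0 G).dual.act g ((cayleyBi0 G).dual.act g⁻¹ w) = w ∧
      (cayleyBi0 G).dual.act g⁻¹ ((cayleyBi0 G).dual.act g w) = w) ∧
    (∃ w : List (G × Bool), FreeGroup.mk w ≠ 1 ∧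
      ∀ v : List G, (cayleyBi0 G).dual.evalW w v = v) :=
  dual_cayleyBi0_generators_mutually_inverse_general
end
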